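/- arXiv:2304.02238 — 4 statements merged into one kernel-verified Lean document; each statement's English description precedes it below -/
import Mathlib

section
/- Let $\alpha^1, \ldots, \alpha^k \in \mathbb{N}^n$ be multi-indices, and let $<$ be the lexicographic order on $\mathbb{N}^n$. Then there exists $a = (a_1, \ldots, a_n) \in \mathbb{N}^n$ (with positive entries) such that for every $1 \leq j \leq k$, $\inf\{\sum_{i=1}^n a_i \beta_i : \beta \in \mathbb{N}^n, \beta > \alpha^j \text{ lexicographically}\} > \sum_{i=1}^n a_i \alpha^j_i$. -/
lemma geom_mul_lt (M m : ℕ) : M * ∑ t ∈ Finset.range m, (M+1)^t < (M+1)^m := by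
  induction m with
  | zero => simp
  | succ m ih =>
    rw [Finset.sum_range_succ, Nat.mul_add, pow_succ]
    have : (M+1)^m * (M+1) = (M+1)^m + M*(M+1)^m := by ring
    omega



/-- Lexicographic order on multi-indices in `ℕ^n`: `α < β` iff at the first index
where they differ, `α` is smaller. -/
def LexLtMulti {n : ℕ} (α β : Fin n → ℕ) : Prop :=
  ∃ i : Fin n, (∀ j : Fin n, j < i → α j = β j) ∧ α i < β i

/-- There is a weight vector `a` with positive entries such that, for each given
multi-index `α^j`, every multi-index lexicographically larger than `α^j` has strictly
larger weighted degree; hence the infimum of weighted degrees of lexicographically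
larger multi-indices strictly exceeds the weighted degree of `α^j`. -/
theorem exists_weight_separating_lex (n k : ℕ) (α : Fin k → Fin n → ℕ) :
    ∃ a : Fin n → ℕ, (∀ i, 0 < a i) ∧
      ∀ j : Fin k, ∀ β : Fin n → ℕ, LexLtMulti (α j) β →
        ∑ i, a i * α j i < ∑ i, a i * β i := by
  set M := Finset.univ.sup (fun p : Fin k × Fin n => α p.1 p.2) with hMdef
  have hM : ∀ j i, α j i ≤ M := fun j i =>
    Finset.le_sup (f := fun p : Fin k × Fin n => α p.1 p.2) (Finset.mem_univ (j, i))
  refine ⟨fun i => (M+1)^(n-1-i.val), fun i => pow_pos (by omega) _, ?_⟩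
  rintro j β ⟨i₀, heq, hlt⟩
  -- reindex tail sum
  have hre : ∑ i ∈ Finset.Ioi i₀, (M+1)^(n-1-i.val)
      = ∑ t ∈ Finset.range (n-1-i₀.val), (M+1)^t := by
    refine Finset.sum_nbij' (fun i => n-1-i.val) (fun t => ⟨n-1-t, by have := i₀.isLt; omega⟩) ?_ ?_ ?_ ?_ ?_
    · intro i hi
      simp only [Finset.mem_Ioi, Fin.lt_def] at hi
      have := i.isLt
      simp only [Finset.mem_range]; omega
    · intro t ht
      simp only [Finset.mem_range] at ht
      simp only [Finset.mem_Ioi, Fin.lt_def]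
      have := i₀.isLt
      omega
    · intro i hi
      simp only [Finset.mem_Ioi, Fin.lt_def] at hi
      have := i.isLt
      ext; simp; omega
    · intro t ht
      simp only [Finset.mem_range] at ht
      simp; omega
    · intro i hi; rfl
  have htail : ∑ i ∈ Finset.Ioi i₀, (M+1)^(n-1-i.val) * α j i < (M+1)^(n-1-i₀.val) := by
    calc ∑ i ∈ Finset.Ioi i₀, (M+1)^(n-1-i.val) * α j i
        ≤ ∑ i ∈ Finset.Ioi i₀, (M+1)^(n-1-i.val) * M :=
          Finset.sum_le_sum fun i _ => Nat.mul_le_mul_left _ (hM j i)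
      _ = M * ∑ i ∈ Finset.Ioi i₀, (M+1)^(n-1-i.val) := by
          rw [Finset.mul_sum]; exact Finset.sum_congr rfl fun i _ => Nat.mul_comm _ _
      _ = M * ∑ t ∈ Finset.range (n-1-i₀.val), (M+1)^t := by rw [hre]
      _ < (M+1)^(n-1-i₀.val) := geom_mul_lt _ _
  -- split sums
  have hsplit : ∀ f : Fin n → ℕ, ∑ i, f i =
      (∑ i ∈ Finset.Iio i₀, f i) + f i₀ + ∑ i ∈ Finset.Ioi i₀, f i := by
    intro f
    rw [Fintype.sum_eq_add_sum_compl i₀ f]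
    have hc : ({i₀} : Finset (Fin n))ᶜ = (Finset.Iio i₀) ∪ (Finset.Ioi i₀) := by
      ext x
      simp only [Finset.mem_compl, Finset.mem_singleton, Finset.mem_union, Finset.mem_Iio,
        Finset.mem_Ioi, Fin.lt_def, Fin.ext_iff]
      omega
    rw [hc, Finset.sum_union (Finset.disjoint_Ioi_Iio i₀).symm]
    ring
  rw [hsplit (fun i => (M+1)^(n-1-i.val) * α j i), hsplit (fun i => (M+1)^(n-1-i.val) * β i)]
  have h1 : ∑ i ∈ Finset.Iio i₀, (M+1)^(n-1-i.val) * α j i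
      = ∑ i ∈ Finset.Iio i₀, (M+1)^(n-1-i.val) * β i :=
    Finset.sum_congr rfl fun i hi => by rw [heq i (Finset.mem_Iio.mp hi)]
  have h2 : (M+1)^(n-1-i₀.val) * α j i₀ + (M+1)^(n-1-i₀.val) ≤ (M+1)^(n-1-i₀.val) * β i₀ := by
    have : α j i₀ + 1 ≤ β i₀ := hlt
    calc (M+1)^(n-1-i₀.val) * α j i₀ + (M+1)^(n-1-i₀.val)
        = (M+1)^(n-1-i₀.val) * (α j i₀ + 1) := by ring
      _ ≤ (M+1)^(n-1-i₀.val) * β i₀ := Nat.mul_le_mul_left _ this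
  have h3 : 0 ≤ ∑ i ∈ Finset.Ioi i₀, (M+1)^(n-1-i.val) * β i := Nat.zero_le _
  omega
end

section
/- Let $h : (\mathbb{R}^+)^n \to \mathbb{R}^+$ be positively 1-homogeneous, concave, nondecreasing in each variable, and positive, with associated $\nu(z) = \min_{a \in S} \frac{1}{h(a_1/z_1, \ldots, a_n/z_n)}$ on the simplex $S$. For $-n < t < 0$, $\min_{x \in S} \max_{y \in S} \big[1 + t \min_{1 \leq i \leq n} x_i\big]\, h\big(\tfrac{y_1}{x_1}, \ldots, \tfrac{y_n}{x_n}\big) \geq \max_{x \in S} h(x) \min\big[t + n, \tfrac{1}{\max_{1 \leq i \leq n} x_i}\big]$. -/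
/-- Lower-bound half of Proposition 3.1(ii): for a positive, concave, monotone,
positively 1-homogeneous function `h` on the positive orthant and `-n < t < 0`,
`min_{x ∈ S} max_{y ∈ S} (1 + t·minᵢ xᵢ)·h(y₁/x₁,…,yₙ/xₙ)
  ≥ max_{x ∈ S} h(x)·min(t + n, 1/maxᵢ xᵢ)`,
where `S` is the open standard simplex. -/
theorem toric_minimax_lower_bound (n : ℕ) (hn : 0 < n)
    (h : (Fin n → ℝ) → ℝ)
    (hpos : ∀ x, (∀ i, 0 < x i) → 0 < h x)
    (hhom : ∀ s : ℝ, 0 < s → ∀ x, (∀ i, 0 < x i) →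
      h (fun i => s * x i) = s * h x)
    (hconc : ConcaveOn ℝ {x : Fin n → ℝ | ∀ i, 0 < x i} h)
    (hmono : ∀ x y, (∀ i, 0 < x i) → (∀ i, x i ≤ y i) → h x ≤ h y)
    (t : ℝ) (ht : -(n : ℝ) < t) (ht0 : t < 0) :
    sSup {v : ℝ | ∃ x : Fin n → ℝ, (∀ i, 0 < x i) ∧ (∑ i, x i) = 1 ∧
        v = h x * min (t + n) (⨆ i, x i)⁻¹} ≤
      sInf {v : ℝ | ∃ x : Fin n → ℝ, (∀ i, 0 < x i) ∧ (∑ i, x i) = 1 ∧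
        v = sSup {w : ℝ | ∃ y : Fin n → ℝ, (∀ i, 0 < y i) ∧ (∑ i, y i) = 1 ∧
          w = (1 + t * ⨅ i, x i) * h (fun i => y i / x i)}} := by
  haveI : Nonempty (Fin n) := Fin.pos_iff_nonempty.mp hn
  have hnR : (0:ℝ) < n := by exact_mod_cast hn
  apply le_csInf
  · refine ⟨_, fun _ => (n:ℝ)⁻¹, fun i => by positivity, ?_, rfl⟩
    simp [Finset.sum_const, Finset.card_univ]
    field_simp
  rintro b ⟨x, hx, hxs, rfl⟩
  set m := ⨅ i, x i with hmdef
  have hm0 : 0 ≤ m := le_ciInf fun i => (hx i).le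
  have hmle : ∀ i, m ≤ x i := fun i => ciInf_le (Finite.bddBelow_range x) i
  have hnm : (n:ℝ) * m ≤ 1 := by
    have h1 := Finset.sum_le_sum (s := Finset.univ) (fun i _ => hmle i)
    rw [hxs] at h1
    simpa [Finset.sum_const, Finset.card_univ, nsmul_eq_mul] using h1
  have htn : 0 < t + n := by linarith
  have h1tm : 0 < 1 + t * m := by nlinarith
  -- the inner sup set over y, for this x
  have bddW : BddAbove {w : ℝ | ∃ y : Fin n → ℝ, (∀ i, 0 < y i) ∧ (∑ i, y i) = 1 ∧
      w = (1 + t * m) * h (fun i => y i / x i)} := by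
    refine ⟨(1 + t * m) * h (fun i => (x i)⁻¹), ?_⟩
    rintro w ⟨y, hy, hys, rfl⟩
    have hle : ∀ i, y i / x i ≤ (x i)⁻¹ := by
      intro i
      have hy1 : y i ≤ 1 := by
        rw [← hys]
        exact Finset.single_le_sum (fun j _ => (hy j).le) (Finset.mem_univ i)
      rw [div_eq_mul_inv]
      nlinarith [inv_pos.mpr (hx i)]
    exact mul_le_mul_of_nonneg_left
      (hmono _ _ (fun i => div_pos (hy i) (hx i)) hle) h1tm.le
  have hw0mem : (1 + t * m) * h (fun i => x i / x i) ∈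
      {w : ℝ | ∃ y : Fin n → ℝ, (∀ i, 0 < y i) ∧ (∑ i, y i) = 1 ∧
        w = (1 + t * m) * h (fun i => y i / x i)} := ⟨x, hx, hxs, rfl⟩
  apply Real.sSup_le
  · rintro a ⟨x', hx', hx's, rfl⟩
    set M := ⨆ i, x' i with hMdef
    have hMle : ∀ i, x' i ≤ M := fun i => le_ciSup (Finite.bddAbove_range x') i
    have hMpos : 0 < M := lt_of_lt_of_le (hx' ⟨0, hn⟩) (hMle ⟨0, hn⟩)
    set σ := ∑ i, x i * x' i with hσdef
    have hσpos : 0 < σ := Finset.sum_pos (fun i _ => mul_pos (hx i) (hx' i))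
      Finset.univ_nonempty
    set y : Fin n → ℝ := fun i => x i * x' i / σ with hydef
    have hy : ∀ i, 0 < y i := fun i => div_pos (mul_pos (hx i) (hx' i)) hσpos
    have hys : (∑ i, y i) = 1 := by
      rw [hydef]
      rw [← Finset.sum_div, ← hσdef, div_self hσpos.ne']
    have hyx : (fun i => y i / x i) = fun i => σ⁻¹ * x' i := by
      funext i
      rw [hydef]
      field_simp [(hx i).ne']
    have hMsum : (∑ i, (M - x' i)) = (n:ℝ) * M - 1 := by
      rw [Finset.sum_sub_distrib, hx's]
      simp [Finset.sum_const, Finset.card_univ, nsmul_eq_mul]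
    have hσle : σ ≤ M - ((n:ℝ) * M - 1) * m := by
      have step : σ ≤ ∑ i, (M * x i - (M - x' i) * m) := by
        refine Finset.sum_le_sum fun i _ => ?_
        nlinarith [mul_le_mul_of_nonneg_left (hmle i) (sub_nonneg.2 (hMle i))]
      calc σ ≤ ∑ i, (M * x i - (M - x' i) * m) := step
        _ = M - ((n:ℝ) * M - 1) * m := by
            rw [Finset.sum_sub_distrib, ← Finset.mul_sum, hxs, ← Finset.sum_mul, hMsum]
            ring
    set c := min (t + (n:ℝ)) M⁻¹ with hcdef
    have hc0 : 0 ≤ c := le_min htn.le (inv_pos.2 hMpos).le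
    have hc1 : c ≤ t + n := min_le_left _ _
    have hc2 : c * M ≤ 1 := by
      have := mul_le_mul_of_nonneg_right (min_le_right (t + (n:ℝ)) M⁻¹) hMpos.le
      rwa [inv_mul_cancel₀ hMpos.ne'] at this
    have hcσ : c * σ ≤ 1 + t * m := by
      have key : c * σ ≤ c * (M - ((n:ℝ) * M - 1) * m) :=
        mul_le_mul_of_nonneg_left hσle hc0
      nlinarith [mul_nonneg (sub_nonneg.2 hnm) (sub_nonneg.2 hc2),
        mul_nonneg (sub_nonneg.2 hc1) hm0]
    have hhx' : 0 < h x' := hpos x' hx'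
    have hmain : h x' * c ≤ (1 + t * m) * h (fun i => y i / x i) := by
      rw [hyx, hhom σ⁻¹ (inv_pos.2 hσpos) x' hx']
      rw [show (1 + t * m) * (σ⁻¹ * h x') = h x' * ((1 + t * m) * σ⁻¹) by ring]
      refine mul_le_mul_of_nonneg_left ?_ hhx'.le
      rw [← div_eq_mul_inv, le_div_iff₀ hσpos]
      exact hcσ
    exact hmain.trans (le_csSup bddW ⟨y, hy, hys, rfl⟩)
  · refine le_trans ?_ (le_csSup bddW hw0mem)
    exact (mul_pos h1tm (hpos _ fun i => div_pos (hx i) (hx i))).le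
end

section
/- For $a \in S = \{a \in (\mathbb{R}^+)^n : \sum_{i=1}^n a_i = 1\}$ and $-n < t < 0$, one has $\min_{x \in S} \frac{1 + t \min_{1 \leq i \leq n} x_i}{\sum_{i=1}^n a_i x_i} = \min\big[t + n, \frac{1}{\max_{1 \leq i \leq n} a_i}\big]$. -/
/-!
Write `m = minᵢ xᵢ` and `M = maxᵢ aᵢ`. The numerator is `(t + n) m + (1 - n m)`, and since
`aᵢ xᵢ ≤ aᵢ m + M (xᵢ - m)` the denominator is at most `m + M (1 - n m)`; both weights `m` and
`1 - n m` are nonnegative, so the ratio is at least `min (t + n) M⁻¹`. The barycentre attains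
`t + n`, and along the segment from the barycentre to a vertex `eⱼ` with `aⱼ = M` the ratio tends
to `M⁻¹`.
-/

open Finset Filter Topology

noncomputable def simplexRatio {ι : Type*} [Fintype ι] (a : ι → ℝ) (t : ℝ) (x : ι → ℝ) : ℝ :=
  (1 + t * ⨅ i, x i) / ∑ i, a i * x i

section

variable {ι : Type*} [Fintype ι]

theorem sum_mul_le_iInf_add_iSup_mul (a x : ι → ℝ) (hasum : ∑ i, a i = 1) :
    ∑ i, a i * x i ≤ (⨅ i, x i) + (⨆ i, a i) * (∑ i, x i - Fintype.card ι * ⨅ i, x i) := by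
  set m := ⨅ i, x i
  set M := ⨆ i, a i
  calc ∑ i, a i * x i ≤ ∑ i, (a i * m + M * (x i - m)) := by
        refine Finset.sum_le_sum fun i _ => ?_
        have hm : m ≤ x i := ciInf_le (Finite.bddBelow_range x) i
        have hM : a i ≤ M := le_ciSup (Finite.bddAbove_range a) i
        nlinarith
    _ = m + M * (∑ i, x i - Fintype.card ι * m) := by
        rw [Finset.sum_add_distrib, ← Finset.sum_mul, hasum, ← Finset.mul_sum,
          Finset.sum_sub_distrib, Finset.sum_const, nsmul_eq_mul, Finset.card_univ, one_mul]

theorem min_le_simplexRatio {a x : ι → ℝ} {t : ℝ} (hapos : ∀ i, 0 < a i)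
    (hasum : ∑ i, a i = 1) (ht : 0 ≤ t + Fintype.card ι) (hxpos : ∀ i, 0 < x i)
    (hxsum : ∑ i, x i = 1) :
    min (t + Fintype.card ι) (⨆ i, a i)⁻¹ ≤ simplexRatio a t x := by
  have : Nonempty ι := by
    by_contra h
    simp [not_nonempty_iff.mp h] at hxsum
  obtain ⟨k, hk⟩ := exists_eq_ciInf_of_finite (f := x)
  obtain ⟨j, hj⟩ := exists_eq_ciSup_of_finite (f := a)
  set n : ℝ := (Fintype.card ι : ℝ)
  set m := ⨅ i, x i
  set M := ⨆ i, a i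
  set c := min (t + n) M⁻¹
  have hm : 0 < m := hk ▸ hxpos k
  have hM : 0 < M := hj ▸ hapos j
  have hnm : n * m ≤ 1 := by
    simpa [n, ← hxsum] using Finset.card_nsmul_le_sum univ x m
      fun i _ => ciInf_le (Finite.bddBelow_range x) i
  have hc : 0 ≤ c := le_min ht (inv_pos.mpr hM).le
  have hcM : c * M ≤ 1 := by
    calc c * M ≤ M⁻¹ * M := by gcongr; exact min_le_right _ _
      _ = 1 := inv_mul_cancel₀ hM.ne'
  have hD : 0 < ∑ i, a i * x i :=
    Finset.sum_pos (fun i _ => mul_pos (hapos i) (hxpos i)) univ_nonempty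
  have hDle := sum_mul_le_iInf_add_iSup_mul a x hasum
  rw [hxsum] at hDle
  rw [simplexRatio, le_div_iff₀ hD]
  nlinarith [mul_le_mul_of_nonneg_left hDle hc, mul_nonneg (sub_nonneg.2 hnm) (sub_nonneg.2 hcM),
    mul_nonneg hm.le (sub_nonneg.2 (min_le_left (t + n) M⁻¹))]

theorem simplexRatio_const_inv_card [Nonempty ι] {a : ι → ℝ} (hasum : ∑ i, a i = 1) (t : ℝ) :
    simplexRatio a t (fun _ => (Fintype.card ι : ℝ)⁻¹) = t + Fintype.card ι := by
  have hn : (Fintype.card ι : ℝ) ≠ 0 := by positivity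
  rw [simplexRatio, ciInf_const, ← Finset.sum_mul, hasum]
  field_simp
  ring

theorem ciInf_const_add_single [Nontrivial ι] [DecidableEq ι] (j : ι) (c : ℝ) {d : ℝ}
    (hd : 0 ≤ d) : ⨅ i, (c + (Pi.single j d : ι → ℝ) i) = c := by
  obtain ⟨i, hi⟩ := exists_ne j
  refine le_antisymm ?_ (le_ciInf fun k => le_add_of_nonneg_right ?_)
  · simpa [hi] using ciInf_le (Finite.bddBelow_range fun k => c + (Pi.single j d : ι → ℝ) k) i
  · by_cases hk : k = j
    · simpa [hk] using hd
    · simp [hk]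

variable [DecidableEq ι]

noncomputable def nearVertex (j : ι) (ε : ℝ) : ι → ℝ :=
  fun i => ε / Fintype.card ι + (Pi.single j (1 - ε) : ι → ℝ) i

theorem nearVertex_pos (j : ι) {ε : ℝ} (hε : ε ∈ Set.Ioo 0 1) (i : ι) :
    0 < nearVertex j ε i := by
  have : Nonempty ι := ⟨j⟩
  refine add_pos_of_pos_of_nonneg (div_pos hε.1 (by positivity)) ?_
  exact (Pi.single_nonneg.mpr (sub_nonneg.mpr hε.2.le) : (0 : ι → ℝ) ≤ _) i

theorem sum_nearVertex (j : ι) (ε : ℝ) : ∑ i, nearVertex j ε i = 1 := by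
  have : Nonempty ι := ⟨j⟩
  have hn : (Fintype.card ι : ℝ) ≠ 0 := by positivity
  simp only [nearVertex, Finset.sum_add_distrib, Finset.sum_const, Finset.card_univ, nsmul_eq_mul,
    Finset.sum_pi_single', Finset.mem_univ, if_true]
  field_simp
  ring

theorem simplexRatio_nearVertex [Nontrivial ι] {a : ι → ℝ} (hasum : ∑ i, a i = 1) (t : ℝ)
    (j : ι) {ε : ℝ} (hε : ε ≤ 1) :
    simplexRatio a t (nearVertex j ε) =
      (1 + t * (ε / Fintype.card ι)) / (ε / Fintype.card ι + a j * (1 - ε)) := by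
  have hsum : ∑ i, a i * nearVertex j ε i = ε / Fintype.card ι + a j * (1 - ε) := by
    simp [nearVertex, mul_add, Finset.sum_add_distrib, ← Finset.sum_mul, hasum, Pi.single_apply]
  have hinf : ⨅ i, nearVertex j ε i = ε / Fintype.card ι :=
    ciInf_const_add_single j _ (sub_nonneg.mpr hε)
  rw [simplexRatio, hinf, hsum]

theorem tendsto_simplexRatio_nearVertex [Nontrivial ι] {a : ι → ℝ} (hasum : ∑ i, a i = 1)
    (t : ℝ) {j : ι} (hj : a j ≠ 0) :
    Tendsto (fun ε => simplexRatio a t (nearVertex j ε)) (𝓝[>] 0) (𝓝 (a j)⁻¹) := by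
  set n : ℝ := (Fintype.card ι : ℝ)
  have hf : ContinuousAt (fun ε => (1 + t * (ε / n)) / (ε / n + a j * (1 - ε))) 0 :=
    ContinuousAt.div (by fun_prop) (by fun_prop) (by simpa using hj)
  have hf0 : (1 + t * (0 / n)) / (0 / n + a j * (1 - 0)) = (a j)⁻¹ := by simp
  refine (hf0 ▸ hf.continuousWithinAt.tendsto).congr' ?_
  filter_upwards [Ioo_mem_nhdsGT (zero_lt_one' ℝ)] with ε hε
  rw [simplexRatio_nearVertex hasum t j hε.2.le]

end

/-- For `a` in the open standard simplex and `-n < t < 0`,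
`min_{x ∈ S} (1 + t·minᵢ xᵢ) / (∑ aᵢ xᵢ) = min(t + n, 1/maxᵢ aᵢ)`. -/
theorem simplex_ratio_min (n : ℕ) (hn : 0 < n)
    (a : Fin n → ℝ) (hapos : ∀ i, 0 < a i) (hasum : (∑ i, a i) = 1)
    (t : ℝ) (ht : -(n : ℝ) < t) (ht0 : t < 0) :
    sInf {v : ℝ | ∃ x : Fin n → ℝ, (∀ i, 0 < x i) ∧ (∑ i, x i) = 1 ∧
        v = (1 + t * ⨅ i, x i) / (∑ i, a i * x i)} =
      min (t + n) (⨆ i, a i)⁻¹ := by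
  have : Nonempty (Fin n) := ⟨⟨0, hn⟩⟩
  set S := {v : ℝ | ∃ x : Fin n → ℝ, (∀ i, 0 < x i) ∧ (∑ i, x i) = 1 ∧
    v = (1 + t * ⨅ i, x i) / (∑ i, a i * x i)}
  have hlow : ∀ v ∈ S, min (t + n) (⨆ i, a i)⁻¹ ≤ v := by
    rintro v ⟨x, hxpos, hxsum, rfl⟩
    simpa only [Fintype.card_fin, simplexRatio] using
      min_le_simplexRatio hapos hasum (by rw [Fintype.card_fin]; linarith) hxpos hxsum
  have hmem : t + n ∈ S := by
    refine ⟨fun _ => (n : ℝ)⁻¹, fun _ => by positivity, by simp [hn.ne'], ?_⟩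
    simpa only [Fintype.card_fin, simplexRatio] using (simplexRatio_const_inv_card hasum t).symm
  have hbdd : BddBelow S := ⟨_, hlow⟩
  refine le_antisymm ?_ (le_csInf ⟨_, hmem⟩ hlow)
  rcases le_total (t + n) (⨆ i, a i)⁻¹ with h | h
  · exact (min_eq_left h).symm ▸ csInf_le hbdd hmem
  obtain ⟨j, hj⟩ := exists_eq_ciSup_of_finite (f := a)
  have haj : a j ≤ 1 := hasum ▸ single_le_sum (fun i _ => (hapos i).le) (mem_univ j)
  -- `1 ≤ (max a)⁻¹ ≤ t + n < n`
  have : Nontrivial (Fin n) := Fin.nontrivial_iff_two_le.mpr <| by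
    have := one_le_inv_iff₀.mpr ⟨hapos j, haj⟩
    exact_mod_cast (show (1 : ℝ) < n by linarith [hj ▸ h])
  rw [min_eq_right h, ← hj]
  refine ge_of_tendsto (tendsto_simplexRatio_nearVertex hasum t (hapos j).ne') ?_
  filter_upwards [Ioo_mem_nhdsGT (zero_lt_one' ℝ)] with ε hε
  exact csInf_le hbdd ⟨_, nearVertex_pos j hε, sum_nearVertex j ε, rfl⟩
end

section
/- Let $u$ be a measurable function near $0$ in $\mathbb{C}^{n-1}$, $0 < t \leq 1$, and define $\psi_t(z', z_n) = \max(u(z'), t \log|z_n|)$ on a polydisc. Then for the log canonical threshold at $0$ one has $c(\psi_t) = c(u) + \frac{1}{t}$, where $c$ denotes the log canonical threshold at the origin of the respective space. -/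
/-!
Write `ψ = max (u z', t log ‖w‖)`, so that `e^{-2cψ} = min (e^{-2cu}, ‖w‖^{-2ct})`.

If `e^{-2cψ}` is integrable near the origin, then by Fubini its integral over a small disc
`‖w‖ < r` is an integrable function of `z'`. On the smaller disc `‖w‖ < e^{u/t}` the minimum is `e^{-2cu}`, so this integral is at
least `π e^{2u/t} e^{-2cu} = π e^{-2(c - 1/t)u}` wherever `e^{u/t} ≤ r`; elsewhere `u` is bounded
below. Hence `e^{-2(c - 1/t)u}` is integrable near the origin.

Conversely, if `e^{-2c'u}` is integrable near the origin and `c < c' + 1/t`, split `c = α + β`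
with `α ≤ c'` and `βt < 1`. Then `e^{-2cψ} ≤ e^{-2αu} ‖w‖^{-2βt} ≤ (e^{-2c'u} + 1) ‖w‖^{-2βt}`,
a product of an integrable function of `z'` and a locally integrable function of `w`.
-/

open MeasureTheory
open scoped ENNReal

/-- The log canonical threshold at a point `x₀` of a function `φ` with respect to a
measure `μ`: `c(φ) = sup {c > 0 : e^{-2cφ} ∈ L¹(μ) near x₀}`. -/
noncomputable def lctAt {X : Type*} [MeasurableSpace X] [TopologicalSpace X]
    (μ : Measure X) (x₀ : X) (φ : X → ℝ) : ℝ≥0∞ :=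
  sSup {e : ℝ≥0∞ | ∃ c : ℝ, e = ENNReal.ofReal c ∧ 0 < c ∧
    ∃ V : Set X, IsOpen V ∧ x₀ ∈ V ∧
      IntegrableOn (fun z => Real.exp (-2 * c * φ z)) V μ}

open Set Metric Filter Topology

section lctAt

variable {X : Type*} [MeasurableSpace X] [TopologicalSpace X] {μ : Measure X} {x₀ : X}
  {φ : X → ℝ}

theorem ofReal_le_lctAt {c : ℝ} (hc : 0 < c)
    (h : IntegrableAtFilter (fun x => Real.exp (-2 * c * φ x)) (𝓝 x₀) μ) :
    ENNReal.ofReal c ≤ lctAt μ x₀ φ := by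
  obtain ⟨s, hs, hint⟩ := h
  obtain ⟨V, hVs, hV, hx₀⟩ := mem_nhds_iff.1 hs
  exact le_sSup ⟨c, rfl, hc, V, hV, hx₀, hint.mono_set hVs⟩

theorem lctAt_le {L : ℝ≥0∞} (h : ∀ c : ℝ, 0 < c →
      IntegrableAtFilter (fun x => Real.exp (-2 * c * φ x)) (𝓝 x₀) μ → ENNReal.ofReal c ≤ L) :
    lctAt μ x₀ φ ≤ L :=
  sSup_le fun _ ⟨c, he, hc, V, hV, hx₀, hint⟩ =>
    he ▸ h c hc ⟨V, hV.mem_nhds hx₀, hint⟩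

theorem exists_integrableAtFilter_of_lt_lctAt_add [IsLocallyFiniteMeasure μ] {d s : ℝ}
    (hs : 0 ≤ s) (h : ENNReal.ofReal d < lctAt μ x₀ φ + ENNReal.ofReal s) :
    ∃ c, 0 ≤ c ∧ d < c + s ∧
      IntegrableAtFilter (fun x => Real.exp (-2 * c * φ x)) (𝓝 x₀) μ := by
  rcases lt_or_ge d s with hds | hsd
  · exact ⟨0, le_rfl, by linarith, by simpa using locallyIntegrable_const (1 : ℝ) x₀⟩
  have hlt : ENNReal.ofReal (d - s) < lctAt μ x₀ φ := by
    rwa [← ENNReal.add_lt_add_iff_right ENNReal.ofReal_ne_top, ← ENNReal.ofReal_add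
      (sub_nonneg.2 hsd) hs, sub_add_cancel]
  obtain ⟨_, ⟨c, rfl, hc, V, hV, hx₀, hint⟩, hdc⟩ := lt_sSup_iff.1 hlt
  have := (ENNReal.ofReal_lt_ofReal_iff hc).1 hdc
  exact ⟨c, hc.le, by linarith, V, hV.mem_nhds hx₀, hint⟩

end lctAt

section Integrability

variable {X E F : Type*} [MeasurableSpace X] {μ : Measure X} [SFinite μ]
  [NormedAddCommGroup E] [NormedSpace ℝ E] [FiniteDimensional ℝ E] [MeasurableSpace E]
  [BorelSpace E] {ν : Measure E} [ν.IsAddHaarMeasure] [NormedAddCommGroup F]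

theorem integrableOn_prod_ball_of_norm_le_mul_rpow (hd : 1 ≤ Module.finrank ℝ E)
    {f : X → ℝ} {V : Set X} (hf : IntegrableOn f V μ) {g : X × E → F}
    (hg : AEStronglyMeasurable g (μ.prod ν)) {p : ℝ} (hp : p < Module.finrank ℝ E) (r : ℝ)
    (hle : ∀ x w, w ≠ 0 → ‖g (x, w)‖ ≤ f x * ‖w‖ ^ (-p)) :
    IntegrableOn g (V ×ˢ ball 0 r) (μ.prod ν) := by
  have : Nontrivial E := Module.nontrivial_of_finrank_pos (R := ℝ) (by omega)
  have hrpow : IntegrableOn (fun w : E => ‖w‖ ^ (-p)) (ball 0 r) ν :=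
    integrableOn_ball_of_norm_le_rpow hd hp (C := 1)
      (ae_of_all _ fun w => by simp [abs_of_nonneg (Real.rpow_nonneg (norm_nonneg w) _)])
      (continuous_norm.measurable.pow_const _).aestronglyMeasurable
  rw [IntegrableOn, ← Measure.prod_restrict]
  refine (hf.mul_prod hrpow).mono' (hg.mono_measure ?_) ?_
  · rw [Measure.prod_restrict]; exact Measure.restrict_le_self
  · filter_upwards [Measure.quasiMeasurePreserving_snd.ae (ae_restrict_of_ae (ν.ae_ne 0))]
      with z hz
    exact hle z.1 z.2 hz

end Integrability

theorem Real.exp_neg_mul_max_le {α β a b : ℝ} (hα : 0 ≤ α) (hβ : 0 ≤ β) :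
    Real.exp (-2 * (α + β) * max a b) ≤ Real.exp (-2 * α * a) * Real.exp (-2 * β * b) := by
  rw [← Real.exp_add, Real.exp_le_exp]
  nlinarith [le_max_left a b, le_max_right a b]

theorem Real.exp_mul_le_exp_mul_add_one {α β a : ℝ} (hα : 0 ≤ α) (hαβ : α ≤ β) :
    Real.exp (α * a) ≤ Real.exp (β * a) + 1 := by
  rcases le_total 0 a with ha | ha
  · exact (Real.exp_le_exp.2 (mul_le_mul_of_nonneg_right hαβ ha)).trans
      (le_add_of_nonneg_right zero_le_one)
  · exact (Real.exp_le_one_iff.2 (mul_nonpos_of_nonneg_of_nonpos hα ha)).trans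
      (le_add_of_nonneg_left (Real.exp_pos _).le)

theorem pi_mul_exp_le_setIntegral_ball_max {a c t r : ℝ} (ht : 0 < t)
    (har : Real.exp (a / t) ≤ r)
    (hint : IntegrableOn (fun w : ℂ => Real.exp (-2 * (c + 1 / t) * max a (t * Real.log ‖w‖)))
      (ball 0 r)) :
    Real.pi * Real.exp (-2 * c * a) ≤
      ∫ w in ball (0 : ℂ) r, Real.exp (-2 * (c + 1 / t) * max a (t * Real.log ‖w‖)) := by
  set ρ := Real.exp (a / t)
  have hconst : ∀ᵐ w ∂volume, w ∈ ball (0 : ℂ) ρ →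
      Real.exp (-2 * (c + 1 / t) * max a (t * Real.log ‖w‖)) =
        Real.exp (-2 * (c + 1 / t) * a) := by
    filter_upwards [volume.ae_ne 0] with w hw hwρ
    have hlog : Real.log ‖w‖ ≤ a / t := by
      rw [← Real.log_exp (a / t)]
      exact Real.log_le_log (norm_pos_iff.2 hw) (mem_ball_zero_iff.1 hwρ).le
    rw [max_eq_left (by rwa [← le_div_iff₀' ht])]
  calc Real.pi * Real.exp (-2 * c * a)
      = (volume (ball (0 : ℂ) ρ)).toReal * Real.exp (-2 * (c + 1 / t) * a) := by
        rw [Complex.volume_ball, ENNReal.toReal_mul, ← ENNReal.ofReal_pow (Real.exp_pos _).le,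
          ENNReal.toReal_ofReal (by positivity), ← Real.exp_nat_mul]
        simp only [ENNReal.coe_toReal, NNReal.coe_real_pi]
        have hexp : -2 * c * a = (2 : ℕ) * (a / t) + -2 * (c + 1 / t) * a := by
          push_cast; field_simp; ring
        rw [hexp, Real.exp_add]
        ring
    _ = ∫ w in ball (0 : ℂ) ρ, Real.exp (-2 * (c + 1 / t) * max a (t * Real.log ‖w‖)) := by
        rw [setIntegral_congr_ae measurableSet_ball hconst, setIntegral_const, smul_eq_mul,
          measureReal_def]
    _ ≤ _ := setIntegral_mono_set hint (ae_of_all _ fun _ => (Real.exp_pos _).le)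
        (ball_subset_ball har).eventuallyLE

theorem exp_le_setIntegral_ball_max_div_pi_add {a c t r : ℝ} (ht : 0 < t) (hc : 0 ≤ c)
    (hr : 0 < r)
    (hint : IntegrableOn (fun w : ℂ => Real.exp (-2 * (c + 1 / t) * max a (t * Real.log ‖w‖)))
      (ball 0 r)) :
    Real.exp (-2 * c * a) ≤
      (∫ w in ball (0 : ℂ) r, Real.exp (-2 * (c + 1 / t) * max a (t * Real.log ‖w‖))) /
        Real.pi + r ^ (-(2 * c * t)) := by
  rcases le_or_gt (Real.exp (a / t)) r with har | hra
  · refine le_add_of_le_of_nonneg ?_ (Real.rpow_nonneg hr.le _)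
    rw [le_div_iff₀' Real.pi_pos]
    exact pi_mul_exp_le_setIntegral_ball_max ht har hint
  · have hlog : t * Real.log r < a := by
      rw [← lt_div_iff₀' ht, ← Real.log_exp (a / t)]
      exact Real.log_lt_log hr hra
    refine le_add_of_nonneg_of_le
      (div_nonneg (integral_nonneg fun _ => (Real.exp_pos _).le) Real.pi_pos.le) ?_
    rw [Real.rpow_def_of_pos hr, Real.exp_le_exp]
    nlinarith

section MaxLog

variable {X : Type*} [TopologicalSpace X] [MeasurableSpace X] {μ : Measure X} [SFinite μ]
  [IsLocallyFiniteMeasure μ] {x₀ : X} {u : X → ℝ} {t c : ℝ}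

theorem integrableAtFilter_exp_max_log_norm {c' : ℝ} (hu : Measurable u) (ht : 0 < t)
    (hc : 0 ≤ c) (hc' : 0 ≤ c') (hlt : c < c' + 1 / t)
    (h : IntegrableAtFilter (fun x => Real.exp (-2 * c' * u x)) (𝓝 x₀) μ) :
    IntegrableAtFilter (fun z : X × ℂ => Real.exp (-2 * c * max (u z.1) (t * Real.log ‖z.2‖)))
      (𝓝 (x₀, 0)) (μ.prod volume) := by
  obtain ⟨V, hV, hint⟩ := h.add ((locallyIntegrable_const (1 : ℝ)) x₀)
  obtain ⟨α, β, hα, hαc', hβ, hβt, rfl⟩ :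
      ∃ α β, 0 ≤ α ∧ α ≤ c' ∧ 0 ≤ β ∧ 2 * β * t < 2 ∧ c = α + β := by
    refine ⟨min c c', c - min c c', le_min hc hc', min_le_right c c',
      sub_nonneg.2 (min_le_left c c'), ?_, by ring⟩
    rcases le_total c c' with h | h
    · simp [min_eq_left h]
    · rw [min_eq_right h, ← lt_div_iff₀ ht]
      field_simp at hlt ⊢
      linarith
  refine ⟨V ×ˢ ball 0 1, prod_mem_nhds hV (ball_mem_nhds 0 one_pos),
    integrableOn_prod_ball_of_norm_le_mul_rpow (by simp) hint
      (Measurable.aestronglyMeasurable (by fun_prop)) (p := 2 * β * t) (by simpa using hβt) 1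
      fun x w hw => ?_⟩
  rw [Real.norm_of_nonneg (Real.exp_pos _).le]
  calc Real.exp (-2 * (α + β) * max (u x) (t * Real.log ‖w‖))
      ≤ Real.exp (-2 * α * u x) * Real.exp (-2 * β * (t * Real.log ‖w‖)) :=
        Real.exp_neg_mul_max_le hα hβ
    _ ≤ (Real.exp (-2 * c' * u x) + 1) * ‖w‖ ^ (-(2 * β * t)) := by
        have hfst : Real.exp (-2 * α * u x) ≤ Real.exp (-2 * c' * u x) + 1 := by
          have := Real.exp_mul_le_exp_mul_add_one (a := -2 * u x) hα hαc'
          ring_nf at this ⊢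
          exact this
        have hsnd : Real.exp (-2 * β * (t * Real.log ‖w‖)) = ‖w‖ ^ (-(2 * β * t)) := by
          rw [Real.rpow_def_of_pos (norm_pos_iff.2 hw)]
          ring_nf
        rw [hsnd]
        exact mul_le_mul_of_nonneg_right hfst (Real.rpow_nonneg (norm_nonneg w) _)

theorem integrableAtFilter_exp_of_integrableAtFilter_exp_max_log_norm (hu : Measurable u)
    (ht : 0 < t) (hc : 0 ≤ c)
    (h : IntegrableAtFilter
      (fun z : X × ℂ => Real.exp (-2 * (c + 1 / t) * max (u z.1) (t * Real.log ‖z.2‖)))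
      (𝓝 (x₀, 0)) (μ.prod volume)) :
    IntegrableAtFilter (fun x => Real.exp (-2 * c * u x)) (𝓝 x₀) μ := by
  obtain ⟨s, hs, hint⟩ := h
  obtain ⟨U, hU, D, hD, hUD⟩ := mem_nhds_prod_iff.1 hs
  obtain ⟨r, hr, hrD⟩ := Metric.mem_nhds_iff.1 hD
  obtain ⟨W, hW, hWfin⟩ := μ.finiteAt_nhds x₀
  have hprod : Integrable
      (fun z : X × ℂ => Real.exp (-2 * (c + 1 / t) * max (u z.1) (t * Real.log ‖z.2‖)))
      ((μ.restrict (U ∩ W)).prod (volume.restrict (ball 0 r))) := by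
    rw [Measure.prod_restrict]
    exact hint.mono_set ((prod_mono inter_subset_left hrD).trans hUD)
  refine ⟨U ∩ W, inter_mem hU hW, Integrable.mono'
    ((hprod.integral_prod_left.div_const Real.pi).add
      (integrableOn_const (C := r ^ (-(2 * c * t)))
        ((measure_mono inter_subset_right).trans_lt hWfin).ne))
    (by fun_prop : Measurable fun x => Real.exp (-2 * c * u x)).aestronglyMeasurable ?_⟩
  filter_upwards [hprod.prod_right_ae] with x hx
  rw [Real.norm_of_nonneg (Real.exp_pos _).le]
  exact exp_le_setIntegral_ball_max_div_pi_add ht hc hr hx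

theorem lctAt_prod_max_log_norm (hu : Measurable u) (ht : 0 < t) :
    lctAt (μ.prod volume) (x₀, 0) (fun z : X × ℂ => max (u z.1) (t * Real.log ‖z.2‖)) =
      lctAt μ x₀ u + ENNReal.ofReal (1 / t) := by
  apply le_antisymm
  · refine lctAt_le fun c hc hint => ?_
    rcases le_or_gt c (1 / t) with hct | htc
    · exact le_add_left (ENNReal.ofReal_le_ofReal hct)
    have hc' : 0 < c - 1 / t := sub_pos.2 htc
    rw [← sub_add_cancel c (1 / t)] at hint
    calc ENNReal.ofReal c = ENNReal.ofReal (c - 1 / t) + ENNReal.ofReal (1 / t) := by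
          rw [← ENNReal.ofReal_add hc'.le (by positivity), sub_add_cancel]
      _ ≤ lctAt μ x₀ u + ENNReal.ofReal (1 / t) := by
          gcongr
          exact ofReal_le_lctAt hc'
            (integrableAtFilter_exp_of_integrableAtFilter_exp_max_log_norm hu ht hc'.le hint)
  · refine le_of_forall_lt_imp_le_of_dense fun x hx => ?_
    obtain ⟨d, -, hxd, hd⟩ := ENNReal.lt_iff_exists_real_btwn.1 hx
    have hd0 : 0 < d := ENNReal.ofReal_pos.1 (pos_of_gt hxd)
    obtain ⟨c', hc', hdc', hint⟩ := exists_integrableAtFilter_of_lt_lctAt_add (by positivity) hd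
    exact hxd.le.trans (ofReal_le_lctAt hd0
      (integrableAtFilter_exp_max_log_norm hu ht hd0.le hc' hdc' hint))

end MaxLog

theorem lct_max_log_abs_general (m : ℕ) (u : (Fin m → ℂ) → ℝ) (hu : Measurable u)
    (t : ℝ) (ht : 0 < t) :
    lctAt (volume : Measure ((Fin m → ℂ) × ℂ)) 0
        (fun z => max (u z.1) (t * Real.log ‖z.2‖)) =
      lctAt (volume : Measure (Fin m → ℂ)) 0 u + ENNReal.ofReal (1 / t) :=
  lctAt_prod_max_log_norm (x₀ := 0) hu ht

/-- For `ψ_t(z', zₙ) = max(u(z'), t·log|zₙ|)` with `0 < t ≤ 1`, the log canonical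
threshold at the origin satisfies `c(ψ_t) = c(u) + 1/t`. -/
theorem lct_max_log_abs (m : ℕ) (u : (Fin m → ℂ) → ℝ) (hu : Measurable u)
    (t : ℝ) (ht : 0 < t) (ht1 : t ≤ 1) :
    lctAt (volume : Measure ((Fin m → ℂ) × ℂ)) 0
        (fun z => max (u z.1) (t * Real.log ‖z.2‖)) =
      lctAt (volume : Measure (Fin m → ℂ)) 0 u + ENNReal.ofReal (1 / t) :=
  lct_max_log_abs_general m u hu t ht
end
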